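/- Let A ∈ ℝ^{m×n} with columns A₁,…,Aₙ, b ∈ ℝ^m, λ > 0, and let x̄ ∈ ℝⁿ and ȳ ∈ ℝ^m. Then x̄ is a solution of the SR-LASSO and ȳ maximizes ⟨b, y⟩ over {y ∈ ℝ^m : ‖Aᵀy‖_∞ ≤ λ, ‖y‖₂ ≤ 1} if and only if the following first-order conditions hold: (a) for every i ∈ {1,…,n}, Aᵢᵀȳ = λ·sgn(x̄ᵢ) whenever x̄ᵢ ≠ 0 and |Aᵢᵀȳ| ≤ λ whenever x̄ᵢ = 0; and (b) if Ax̄ ≠ b then ȳ = (b − Ax̄)/‖Ax̄ − b‖₂, while if Ax̄ = b then ‖ȳ‖₂ ≤ 1. -/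
import Mathlib


open Matrix Filter Topology
open scoped BigOperators Classical

noncomputable def l2 {k : ℕ} (x : Fin k → ℝ) : ℝ := Real.sqrt (∑ i, (x i) ^ 2)

noncomputable def l1 {k : ℕ} (x : Fin k → ℝ) : ℝ := ∑ i, |x i|

noncomputable def linf {k : ℕ} (x : Fin k → ℝ) : ℝ := sSup (Set.range fun i => |x i|)

noncomputable def dotp {k : ℕ} (x y : Fin k → ℝ) : ℝ := ∑ i, x i * y i

noncomputable def pinv {m s : ℕ} (M : Matrix (Fin m) (Fin s) ℝ) :
    Matrix (Fin s) (Fin m) ℝ := (Mᵀ * M)⁻¹ * Mᵀ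

/-- The SR-LASSO objective f_{A,b,λ}(x) := ‖Ax − b‖₂ + λ‖x‖₁. -/
noncomputable def srObj {m n : ℕ} (A : Matrix (Fin m) (Fin n) ℝ) (b : Fin m → ℝ)
    (lam : ℝ) (x : Fin n → ℝ) : ℝ := l2 (A.mulVec x - b) + lam * l1 x

/-- x is a solution of the SR-LASSO with data (A, b, λ). -/
def IsSol {m n : ℕ} (A : Matrix (Fin m) (Fin n) ℝ) (b : Fin m → ℝ) (lam : ℝ)
    (x : Fin n → ℝ) : Prop := ∀ w : Fin n → ℝ, srObj A b lam x ≤ srObj A b lam w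

/-- y is feasible for the SR-LASSO dual: ‖Aᵀy‖_∞ ≤ λ and ‖y‖₂ ≤ 1. -/
noncomputable def DualFeas {m n : ℕ} (A : Matrix (Fin m) (Fin n) ℝ) (lam : ℝ)
    (y : Fin m → ℝ) : Prop := linf (Aᵀ.mulVec y) ≤ lam ∧ l2 y ≤ 1

/-- y is a solution of the SR-LASSO dual: it is feasible and maximizes ⟨b, ·⟩
over the feasible set. -/
noncomputable def IsDualSol {m n : ℕ} (A : Matrix (Fin m) (Fin n) ℝ) (b : Fin m → ℝ)
    (lam : ℝ) (y : Fin m → ℝ) : Prop :=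
  DualFeas A lam y ∧ ∀ y' : Fin m → ℝ, DualFeas A lam y' → dotp b y' ≤ dotp b y


lemma l2_nonneg {k : ℕ} (x : Fin k → ℝ) : 0 ≤ l2 x := Real.sqrt_nonneg _

lemma dotp_self {k : ℕ} (x : Fin k → ℝ) : dotp x x = (l2 x)^2 := by
  rw [l2, Real.sq_sqrt (Finset.sum_nonneg fun i _ => sq_nonneg _)]
  simp [dotp, sq]

lemma l2_eq_zero_iff {k : ℕ} {x : Fin k → ℝ} : l2 x = 0 ↔ x = 0 := by
  rw [l2, Real.sqrt_eq_zero (Finset.sum_nonneg fun i _ => sq_nonneg _)]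
  rw [Finset.sum_eq_zero_iff_of_nonneg (fun i _ => sq_nonneg _)]
  constructor
  · intro h; funext i; simpa [pow_eq_zero_iff] using h i (Finset.mem_univ i)
  · intro h i _; simp [h]

lemma dotp_comm {k : ℕ} (x y : Fin k → ℝ) : dotp x y = dotp y x := by
  simp [dotp, mul_comm]

lemma dotp_add_left {k : ℕ} (x y z : Fin k → ℝ) :
    dotp (x + y) z = dotp x z + dotp y z := by
  simp [dotp, add_mul, Finset.sum_add_distrib]

lemma dotp_sub_left {k : ℕ} (x y z : Fin k → ℝ) :
    dotp (x - y) z = dotp x z - dotp y z := by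
  simp [dotp, sub_mul, Finset.sum_sub_distrib]

lemma dotp_smul_left {k : ℕ} (c : ℝ) (x y : Fin k → ℝ) :
    dotp (c • x) y = c * dotp x y := by
  simp [dotp, Finset.mul_sum, mul_assoc]

lemma dotp_smul_right {k : ℕ} (c : ℝ) (x y : Fin k → ℝ) :
    dotp x (c • y) = c * dotp x y := by
  rw [dotp_comm, dotp_smul_left, dotp_comm]

lemma l2_smul {k : ℕ} (c : ℝ) (x : Fin k → ℝ) : l2 (c • x) = |c| * l2 x := by
  simp only [l2, Pi.smul_apply, smul_eq_mul, mul_pow, ← Finset.mul_sum]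
  rw [Real.sqrt_mul (sq_nonneg c), Real.sqrt_sq_eq_abs]

lemma l2_neg_sub {k : ℕ} (x y : Fin k → ℝ) : l2 (x - y) = l2 (y - x) := by
  unfold l2; congr 1; apply Finset.sum_congr rfl; intro i _
  simp only [Pi.sub_apply]; ring

lemma abs_le_l2 {k : ℕ} (x : Fin k → ℝ) (i : Fin k) : |x i| ≤ l2 x := by
  rw [l2, ← Real.sqrt_sq_eq_abs]
  exact Real.sqrt_le_sqrt (Finset.single_le_sum (f := fun j => (x j)^2)
    (fun j _ => sq_nonneg _) (Finset.mem_univ i))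

lemma dotp_le_l2_mul_l2 {k : ℕ} (x y : Fin k → ℝ) : dotp x y ≤ l2 x * l2 y := by
  have h := Finset.sum_mul_sq_le_sq_mul_sq Finset.univ x y
  have := Real.sqrt_le_sqrt h
  rw [Real.sqrt_mul (Finset.sum_nonneg fun i _ => sq_nonneg _)] at this
  calc dotp x y ≤ |dotp x y| := le_abs_self _
    _ = Real.sqrt ((∑ i, x i * y i)^2) := by rw [Real.sqrt_sq_eq_abs]; rfl
    _ ≤ _ := by rw [l2, l2]; exact this

lemma abs_le_linf {k : ℕ} (x : Fin k → ℝ) (i : Fin k) : |x i| ≤ linf x :=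
  le_csSup ((Set.finite_range _).bddAbove) ⟨i, rfl⟩

lemma linf_le {k : ℕ} {x : Fin k → ℝ} {c : ℝ} (hc : 0 ≤ c) (h : ∀ i, |x i| ≤ c) :
    linf x ≤ c := Real.sSup_le (by rintro _ ⟨i, rfl⟩; exact h i) hc

lemma dotp_mulVec {m n : ℕ} (A : Matrix (Fin m) (Fin n) ℝ) (x : Fin n → ℝ)
    (y : Fin m → ℝ) : dotp (A.mulVec x) y = dotp x (Aᵀ.mulVec y) := by
  simp only [dotp, Matrix.mulVec, dotProduct, Finset.sum_mul, Finset.mul_sum,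
    Matrix.transpose_apply]
  rw [Finset.sum_comm]
  apply Finset.sum_congr rfl; intro i _; apply Finset.sum_congr rfl; intro j _; ring

lemma l1_nonneg {k : ℕ} (x : Fin k → ℝ) : 0 ≤ l1 x :=
  Finset.sum_nonneg fun i _ => abs_nonneg _

lemma dotp_split {m n : ℕ} (A : Matrix (Fin m) (Fin n) ℝ) (b : Fin m → ℝ)
    (x : Fin n → ℝ) (y : Fin m → ℝ) :
    dotp b y = dotp (b - A.mulVec x) y + dotp x (Aᵀ.mulVec y) := by
  rw [← dotp_mulVec, dotp_sub_left]; ring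

lemma dotp_le_lam_l1 {m n : ℕ} {A : Matrix (Fin m) (Fin n) ℝ} {lam : ℝ}
    {y : Fin m → ℝ} (hf : linf (Aᵀ.mulVec y) ≤ lam) (x : Fin n → ℝ) :
    dotp x (Aᵀ.mulVec y) ≤ lam * l1 x := by
  rw [dotp, l1, Finset.mul_sum]
  apply Finset.sum_le_sum
  intro i _
  calc x i * Aᵀ.mulVec y i ≤ |x i * Aᵀ.mulVec y i| := le_abs_self _
    _ = |x i| * |Aᵀ.mulVec y i| := abs_mul _ _
    _ ≤ |x i| * lam := by
        exact mul_le_mul_of_nonneg_left ((abs_le_linf _ i).trans hf) (abs_nonneg _)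
    _ = lam * |x i| := mul_comm _ _

lemma weak_duality {m n : ℕ} {A : Matrix (Fin m) (Fin n) ℝ} {b : Fin m → ℝ}
    {lam : ℝ} {y : Fin m → ℝ} (hf : DualFeas A lam y) (x : Fin n → ℝ) :
    dotp b y ≤ srObj A b lam x := by
  rw [dotp_split A b x y, srObj]
  have h1 : dotp (b - A.mulVec x) y ≤ l2 (A.mulVec x - b) :=
    calc dotp (b - A.mulVec x) y ≤ l2 (b - A.mulVec x) * l2 y := dotp_le_l2_mul_l2 _ _
      _ ≤ l2 (b - A.mulVec x) * 1 :=
          mul_le_mul_of_nonneg_left hf.2 (l2_nonneg _)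
      _ = l2 (A.mulVec x - b) := by rw [mul_one, l2_neg_sub]
  exact add_le_add h1 (dotp_le_lam_l1 hf.1 x)

def Cert {m n : ℕ} (A : Matrix (Fin m) (Fin n) ℝ) (b : Fin m → ℝ) (lam : ℝ)
    (xbar : Fin n → ℝ) (y : Fin m → ℝ) : Prop :=
  (∀ i : Fin n,
      (xbar i ≠ 0 → Aᵀ.mulVec y i = lam * Real.sign (xbar i)) ∧
      (xbar i = 0 → |Aᵀ.mulVec y i| ≤ lam)) ∧
  (A.mulVec xbar ≠ b → y = (l2 (A.mulVec xbar - b))⁻¹ • (b - A.mulVec xbar)) ∧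
  (A.mulVec xbar = b → l2 y ≤ 1)

lemma mul_sign_eq_abs {x : ℝ} (hx : x ≠ 0) : x * Real.sign x = |x| := by
  rcases lt_trichotomy x 0 with h | h | h
  · rw [Real.sign_of_neg h, abs_of_neg h]; ring
  · exact absurd h hx
  · rw [Real.sign_of_pos h, abs_of_pos h]; ring

lemma abs_sign_eq_one {x : ℝ} (hx : x ≠ 0) : |Real.sign x| = 1 := by
  rcases lt_trichotomy x 0 with h | h | h
  · rw [Real.sign_of_neg h]; norm_num
  · exact absurd h hx
  · rw [Real.sign_of_pos h]; norm_num

lemma cert_feas_eq {m n : ℕ} {A : Matrix (Fin m) (Fin n) ℝ} {b : Fin m → ℝ}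
    {lam : ℝ} (hlam : 0 < lam) {xbar : Fin n → ℝ} {y : Fin m → ℝ}
    (hc : Cert A b lam xbar y) :
    DualFeas A lam y ∧ dotp b y = srObj A b lam xbar := by
  obtain ⟨ha, hb1, hb2⟩ := hc
  have hy1 : l2 y ≤ 1 := by
    by_cases hr : A.mulVec xbar = b
    · exact hb2 hr
    · have hw : b - A.mulVec xbar ≠ 0 := by
        intro h0; apply hr
        have := sub_eq_zero.mp h0; exact this.symm
      have ha2 : l2 (A.mulVec xbar - b) ≠ 0 := by
        rw [l2_neg_sub]; exact fun h => hw (l2_eq_zero_iff.mp h)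
      rw [hb1 hr, l2_smul, abs_of_nonneg (inv_nonneg.mpr (l2_nonneg _)),
        ← l2_neg_sub (A.mulVec xbar) b]
      rw [inv_mul_cancel₀ ha2]
  have hfeas : DualFeas A lam y := by
    refine ⟨linf_le hlam.le fun i => ?_, hy1⟩
    by_cases hx : xbar i = 0
    · exact (ha i).2 hx
    · rw [(ha i).1 hx, abs_mul, abs_of_pos hlam, abs_sign_eq_one hx, mul_one]
  refine ⟨hfeas, ?_⟩
  rw [dotp_split A b xbar y, srObj]
  have h2 : dotp xbar (Aᵀ.mulVec y) = lam * l1 xbar := by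
    rw [dotp, l1, Finset.mul_sum]
    apply Finset.sum_congr rfl
    intro i _
    by_cases hx : xbar i = 0
    · simp [hx]
    · rw [(ha i).1 hx]
      rw [show xbar i * (lam * Real.sign (xbar i)) = lam * (xbar i * Real.sign (xbar i)) by ring,
        mul_sign_eq_abs hx]
  have h1 : dotp (b - A.mulVec xbar) y = l2 (A.mulVec xbar - b) := by
    by_cases hr : A.mulVec xbar = b
    · rw [hr]; simp [dotp, l2]
    · have ha2 : l2 (A.mulVec xbar - b) ≠ 0 := by
        rw [l2_neg_sub]
        intro h
        exact hr (sub_eq_zero.mp (l2_eq_zero_iff.mp h)).symm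
      rw [hb1 hr, dotp_smul_right, dotp_self, ← l2_neg_sub (A.mulVec xbar) b]
      field_simp
  rw [h1, h2]

lemma dotp_sub_right {k : ℕ} (x y z : Fin k → ℝ) :
    dotp x (y - z) = dotp x y - dotp x z := by
  rw [dotp_comm, dotp_sub_left, dotp_comm y x, dotp_comm z x]

lemma extract_cert {m n : ℕ} {A : Matrix (Fin m) (Fin n) ℝ} {b : Fin m → ℝ}
    {lam : ℝ} (hlam : 0 < lam) {xbar : Fin n → ℝ} {y : Fin m → ℝ}
    (hf : DualFeas A lam y) (heq : dotp b y = srObj A b lam xbar) :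
    Cert A b lam xbar y := by
  set g := Aᵀ.mulVec y with hg
  have hP : dotp (b - A.mulVec xbar) y ≤ l2 (A.mulVec xbar - b) :=
    calc dotp (b - A.mulVec xbar) y ≤ l2 (b - A.mulVec xbar) * l2 y := dotp_le_l2_mul_l2 _ _
      _ ≤ l2 (b - A.mulVec xbar) * 1 := mul_le_mul_of_nonneg_left hf.2 (l2_nonneg _)
      _ = l2 (A.mulVec xbar - b) := by rw [mul_one, l2_neg_sub]
  have hQ : dotp xbar g ≤ lam * l1 xbar := dotp_le_lam_l1 hf.1 xbar
  rw [dotp_split A b xbar y, srObj] at heq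
  have hPeq : dotp (b - A.mulVec xbar) y = l2 (A.mulVec xbar - b) := by linarith
  have hQeq : dotp xbar g = lam * l1 xbar := by linarith
  have hterm : ∀ i : Fin n, xbar i * g i = lam * |xbar i| := by
    have hsum : ∑ i, (lam * |xbar i| - xbar i * g i) = 0 := by
      rw [Finset.sum_sub_distrib, ← Finset.mul_sum]
      rw [dotp] at hQeq; rw [l1] at hQeq; linarith
    have hnn : ∀ i ∈ Finset.univ, 0 ≤ lam * |xbar i| - xbar i * g i := by
      intro i _
      have h1 : xbar i * g i ≤ |xbar i| * |g i| := (le_abs_self _).trans (abs_mul _ _).le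
      have h2 : |g i| ≤ lam := (abs_le_linf _ i).trans hf.1
      nlinarith [abs_nonneg (xbar i)]
    intro i
    have := (Finset.sum_eq_zero_iff_of_nonneg hnn).mp hsum i (Finset.mem_univ i)
    linarith
  refine ⟨fun i => ⟨fun hx => ?_, fun hx => (abs_le_linf _ i).trans hf.1⟩, fun hr => ?_, fun _ => hf.2⟩
  · apply mul_left_cancel₀ hx
    rw [hterm i, show xbar i * (lam * Real.sign (xbar i)) = lam * (xbar i * Real.sign (xbar i)) by ring,
      mul_sign_eq_abs hx]
  · -- Cauchy-Schwarz equality case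
    set w := b - A.mulVec xbar with hw
    have hw0 : w ≠ 0 := fun h0 => hr (sub_eq_zero.mp h0).symm
    set a := l2 (A.mulVec xbar - b) with hadef
    have haw : l2 w = a := by rw [hadef, l2_neg_sub]
    have ha0 : 0 < a := by
      rcases (l2_nonneg w).lt_or_eq with h | h
      · rwa [haw] at h
      · exact absurd (l2_eq_zero_iff.mp h.symm) hw0
    have hvv : dotp (w - a • y) (w - a • y) = 0 := by
      have expand : dotp (w - a • y) (w - a • y)
          = dotp w w - a * dotp w y - a * dotp w y + a * a * dotp y y := by
        calc dotp (w - a • y) (w - a • y)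
            = ∑ i, (w i * w i - a * (w i * y i) - a * (w i * y i) + a * a * (y i * y i)) :=
              Finset.sum_congr rfl fun i _ => by
                simp only [Pi.sub_apply, Pi.smul_apply, smul_eq_mul]; ring
          _ = _ := by
              simp [dotp, Finset.sum_add_distrib, Finset.sum_sub_distrib, Finset.mul_sum]
      have h1 : dotp w w = a^2 := by rw [dotp_self, haw]
      have h2 : dotp w y = a := hPeq
      have h3 : dotp y y ≤ 1 := by
        rw [dotp_self]
        calc (l2 y)^2 ≤ 1^2 := by
              apply pow_le_pow_left₀ (l2_nonneg y) hf.2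
          _ = 1 := one_pow 2
      have h4 : 0 ≤ dotp (w - a • y) (w - a • y) := by
        rw [dotp_self]; exact sq_nonneg _
      nlinarith
    have hz : w - a • y = 0 := by
      apply l2_eq_zero_iff.mp
      have := hvv; rw [dotp_self] at this
      exact pow_eq_zero_iff (by norm_num) |>.mp this
    have : w = a • y := by rwa [sub_eq_zero] at hz
    rw [this, smul_smul, inv_mul_cancel₀ ha0.ne', one_smul]

lemma le_small {a c E d0 : ℝ} (hE : 0 ≤ E) (hd0 : 0 < d0)
    (h : ∀ δ : ℝ, 0 < δ → δ ≤ d0 → a ≤ c + δ * E) : a ≤ c := by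
  by_contra h'
  push_neg at h'
  have hE1 : (0:ℝ) < E + 1 := by linarith
  set δ := min d0 ((a - c) / (2 * (E + 1))) with hδ
  have hδ0 : 0 < δ := lt_min hd0 (div_pos (by linarith) (by positivity))
  have h1 : a ≤ c + δ * E := h δ hδ0 (min_le_left _ _)
  have h2 : δ ≤ (a - c) / (2 * (E + 1)) := min_le_right _ _
  have h3 : δ * E ≤ (a - c) / (2 * (E + 1)) * E := mul_le_mul_of_nonneg_right h2 hE
  have h4 : (a - c) / (2 * (E + 1)) * E ≤ (a - c) / 2 := by
    rw [div_mul_eq_mul_div, div_le_div_iff₀ (by positivity) (by norm_num)]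
    nlinarith
  linarith

lemma sqrt_le_bound {a s : ℝ} (ha : 0 < a) (hs : 0 ≤ a^2 + s) :
    Real.sqrt (a^2 + s) ≤ a + s / (2*a) := by
  have h2 : 2*a*(s/(2*a)) = s := mul_div_cancel₀ _ (by positivity)
  have hr : 0 ≤ a + s/(2*a) := by nlinarith
  have hle : a^2 + s ≤ (a + s/(2*a))^2 := by nlinarith [sq_nonneg (s/(2*a))]
  calc Real.sqrt (a^2+s) ≤ Real.sqrt ((a + s/(2*a))^2) := Real.sqrt_le_sqrt hle
    _ = a + s/(2*a) := Real.sqrt_sq hr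

lemma l2_eq_sqrt_dotp {k : ℕ} (v : Fin k → ℝ) : l2 v = Real.sqrt (dotp v v) := by
  rw [dotp_self, Real.sqrt_sq (l2_nonneg v)]

lemma dotp_expand {k : ℕ} (r u : Fin k → ℝ) (t : ℝ) :
    dotp (r + t • u) (r + t • u) = dotp r r + (2*t*dotp u r + t^2*dotp u u) := by
  calc dotp (r + t • u) (r + t • u)
      = ∑ i, (r i * r i + (2*t*(u i * r i) + t^2*(u i * u i))) :=
        Finset.sum_congr rfl fun i _ => by
          simp only [Pi.add_apply, Pi.smul_apply, smul_eq_mul]; ring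
    _ = _ := by
        simp [dotp, Finset.sum_add_distrib, Finset.mul_sum]

lemma l2_add_smul_le {k : ℕ} {r : Fin k → ℝ} (u : Fin k → ℝ) (t : ℝ)
    (ha : 0 < l2 r) :
    l2 (r + t • u) ≤ l2 r + t * (dotp u r / l2 r) + t^2 * (dotp u u / (2 * l2 r)) := by
  set a := l2 r
  set s := 2*t*dotp u r + t^2*dotp u u
  have h1 : l2 (r + t • u) = Real.sqrt (a^2 + s) := by
    rw [l2_eq_sqrt_dotp, dotp_expand, dotp_self]
  have hs : 0 ≤ a^2 + s := by
    rw [← dotp_self, ← dotp_expand r u t, dotp_self]; exact sq_nonneg _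
  rw [h1]
  calc Real.sqrt (a^2+s) ≤ a + s / (2*a) := sqrt_le_bound ha hs
    _ = a + t * (dotp u r / a) + t^2 * (dotp u u / (2*a)) := by
        field_simp; ring

lemma abs_add_small {c t : ℝ} (hc : c ≠ 0) (ht : |t| < |c|) :
    |c + t| = |c| + t * Real.sign c := by
  rcases lt_trichotomy c 0 with h | h | h
  · rw [Real.sign_of_neg h, abs_of_neg h]
    rw [abs_of_neg (by cases abs_lt.mp ht; linarith [abs_of_neg h] : c + t < 0)]
    ring
  · exact absurd h hc
  · rw [Real.sign_of_pos h, abs_of_pos h]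
    rw [abs_of_pos (by cases abs_lt.mp ht; linarith [abs_of_pos h] : 0 < c + t)]
    ring

lemma key_real {lam c D E : ℝ} (hlam : 0 < lam) (hE : 0 ≤ E)
    (H : ∀ t : ℝ, lam*|c| - lam*|c+t| ≤ t*D + t^2*E) :
    (c = 0 → |D| ≤ lam) ∧ (c ≠ 0 → D = -lam * Real.sign c) := by
  constructor
  · intro hc
    subst hc
    rw [abs_le]
    constructor
    · -- -lam ≤ D : use t = δ > 0
      rw [neg_le]
      apply le_small hE one_pos
      intro δ hδ0 _
      have := H δ
      simp only [abs_zero, zero_add] at this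
      rw [abs_of_pos hδ0] at this
      nlinarith
    · -- D ≤ lam : use t = -δ
      apply le_small hE one_pos
      intro δ hδ0 _
      have := H (-δ)
      simp only [abs_zero, zero_add, abs_neg] at this
      rw [abs_of_pos hδ0] at this
      nlinarith
  · intro hc
    have hc0 : 0 < |c| := abs_pos.mpr hc
    set s := Real.sign c
    have h1 : -lam * s ≤ D := by
      rw [neg_mul, neg_le]
      have : -D ≤ lam * s := by
        apply le_small hE (half_pos hc0)
        intro δ hδ0 hδle
        have habs : |δ| < |c| := by rw [abs_of_pos hδ0]; linarith
        have := H δ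
        rw [abs_add_small hc habs] at this
        nlinarith
      linarith
    have h2 : D ≤ -lam * s := by
      have : lam * s ≤ -D := by
        apply le_small hE (half_pos hc0)
        intro δ hδ0 hδle
        have habs : |(-δ)| < |c| := by rw [abs_neg, abs_of_pos hδ0]; linarith
        have := H (-δ)
        rw [abs_add_small hc habs] at this
        nlinarith
      linarith
    linarith

lemma mulVec_add_single {m n : ℕ} (A : Matrix (Fin m) (Fin n) ℝ)
    (x : Fin n → ℝ) (t : ℝ) (i : Fin n) :
    A.mulVec (x + t • (Pi.single i 1 : Fin _ → ℝ)) = A.mulVec x + t • (fun j => A j i) := by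
  funext j
  simp only [Matrix.mulVec, dotProduct, Pi.add_apply, Pi.smul_apply,
    smul_eq_mul, Pi.single_apply, mul_add, Finset.sum_add_distrib, mul_ite, mul_one, mul_zero]
  congr 1
  rw [Finset.sum_ite_eq' Finset.univ i (fun k => A j k * t)]
  simp [mul_comm]

lemma l1_add_single {n : ℕ} (x : Fin n → ℝ) (t : ℝ) (i : Fin n) :
    l1 (x + t • (Pi.single i 1 : Fin _ → ℝ)) = l1 x - |x i| + |x i + t| := by
  have key : l1 (x + t • (Pi.single i 1 : Fin _ → ℝ)) - l1 x = |x i + t| - |x i| := by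
    rw [l1, l1, ← Finset.sum_sub_distrib]
    rw [Finset.sum_eq_single i]
    · simp
    · intro j _ hj
      simp [Pi.single_apply, hj]
    · intro h; exact absurd (Finset.mem_univ i) h
  linarith

lemma exists_cert_ne {m n : ℕ} {A : Matrix (Fin m) (Fin n) ℝ} {b : Fin m → ℝ}
    {lam : ℝ} (hlam : 0 < lam) {xbar : Fin n → ℝ}
    (hsol : IsSol A b lam xbar) (hr : A.mulVec xbar ≠ b) :
    Cert A b lam xbar ((l2 (A.mulVec xbar - b))⁻¹ • (b - A.mulVec xbar)) := by
  set r := A.mulVec xbar - b with hrdef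
  set a := l2 r with hadef
  have hr0 : r ≠ 0 := sub_ne_zero.mpr hr
  have ha : 0 < a := by
    rcases (l2_nonneg r).lt_or_eq with h | h
    · exact h
    · exact absurd (l2_eq_zero_iff.mp h.symm) hr0
  set ystar := a⁻¹ • (b - A.mulVec xbar) with hydef
  have hbsub : b - A.mulVec xbar = -r := by rw [hrdef]; abel
  have hmain : ∀ i : Fin n,
      (xbar i ≠ 0 → Aᵀ.mulVec ystar i = lam * Real.sign (xbar i)) ∧
      (xbar i = 0 → |Aᵀ.mulVec ystar i| ≤ lam) := by
    intro i
    set u : Fin m → ℝ := fun j => A j i with hudef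
    set D := dotp u r / a with hDdef
    set E := dotp u u / (2*a) with hEdef
    have hE : 0 ≤ E := by
      rw [hEdef, dotp_self]
      positivity
    have hgi : Aᵀ.mulVec ystar i = -D := by
      have h1 : Aᵀ.mulVec ystar i = dotp u ystar := by
        simp [Matrix.mulVec, dotProduct, Matrix.transpose_apply, dotp, hudef]
      rw [h1, hydef, dotp_smul_right, hbsub]
      have : dotp u (-r) = -dotp u r := by
        rw [show (-r) = (0:Fin m → ℝ) - r by abel, dotp_sub_right]
        simp [dotp]
      rw [this, hDdef]
      field_simp
    have H : ∀ t : ℝ, lam*|xbar i| - lam*|xbar i + t| ≤ t*D + t^2*E := by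
      intro t
      have hopt := hsol (xbar + t • (Pi.single i 1 : Fin n → ℝ))
      rw [srObj, srObj, mulVec_add_single, l1_add_single] at hopt
      have hrewrite : A.mulVec xbar + t • u - b = r + t • u := by
        rw [hrdef]; abel
      rw [hrewrite] at hopt
      have hbound := l2_add_smul_le u t ha
      rw [← hadef, ← hDdef] at hbound
      have : t^2 * (dotp u u / (2*a)) = t^2 * E := by rw [hEdef]
      rw [this] at hbound
      rw [← hrdef, ← hadef] at hopt
      linarith
    obtain ⟨h0, hne⟩ := key_real hlam hE H
    constructor
    · intro hx
      rw [hgi, hne hx]; ring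
    · intro hx
      rw [hgi, abs_neg]; exact h0 hx
  exact ⟨hmain, fun _ => rfl, fun h => absurd h hr⟩

lemma l2_zero {k : ℕ} : l2 (0 : Fin k → ℝ) = 0 := by simp [l2]

lemma l2_add_le {k : ℕ} (x y : Fin k → ℝ) : l2 (x + y) ≤ l2 x + l2 y := by
  have h : (l2 (x+y))^2 ≤ (l2 x + l2 y)^2 := by
    rw [← dotp_self]
    have expand : dotp (x+y) (x+y) = dotp x x + 2 * dotp x y + dotp y y := by
      calc dotp (x+y) (x+y) = ∑ i, (x i * x i + 2*(x i * y i) + y i * y i) :=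
            Finset.sum_congr rfl fun i _ => by simp only [Pi.add_apply]; ring
        _ = _ := by simp [dotp, Finset.sum_add_distrib, Finset.mul_sum]
    rw [expand, dotp_self, dotp_self]
    nlinarith [dotp_le_l2_mul_l2 x y]
  have := Real.sqrt_le_sqrt h
  rwa [Real.sqrt_sq (l2_nonneg _),
    Real.sqrt_sq (add_nonneg (l2_nonneg x) (l2_nonneg y))] at this

lemma sign_mul_eq_abs (x : ℝ) : Real.sign x * x = |x| := by
  rcases lt_trichotomy x 0 with h | h | h
  · rw [Real.sign_of_neg h, abs_of_neg h]; ring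
  · simp [h]
  · rw [Real.sign_of_pos h, abs_of_pos h]; ring

lemma abs_sign_le_one (x : ℝ) : |Real.sign x| ≤ 1 := by
  rcases lt_trichotomy x 0 with h | h | h
  · rw [Real.sign_of_neg h]; norm_num
  · simp [h, Real.sign_zero]
  · rw [Real.sign_of_pos h]; norm_num

lemma exists_cert_eqcase {m n : ℕ} {A : Matrix (Fin m) (Fin n) ℝ} {b : Fin m → ℝ}
    {lam : ℝ} (hlam : 0 < lam) {xbar : Fin n → ℝ}
    (hsol : IsSol A b lam xbar) (hr : A.mulVec xbar = b) :
    ∃ y : Fin m → ℝ, Cert A b lam xbar y := by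
  classical
  set S : Fin n → Set ℝ := fun i =>
    if xbar i = 0 then Set.Icc (-lam) lam else {lam * Real.sign (xbar i)} with hS
  set G : Set (Fin n → ℝ) := Set.univ.pi S with hG
  set K : Set (Fin n → ℝ) := (fun y => Aᵀ.mulVec y) '' {y | l2 y ≤ 1} with hK
  by_cases hdisj : ¬ Disjoint K G
  · rw [Set.not_disjoint_iff] at hdisj
    obtain ⟨g, hgK, hgG⟩ := hdisj
    obtain ⟨y, hy, rfl⟩ := hgK
    refine ⟨y, fun i => ?_, fun h => absurd hr h, fun _ => hy⟩
    have hmem := hgG i (Set.mem_univ i)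
    simp only [hS] at hmem
    constructor
    · intro hx
      rw [if_neg hx, Set.mem_singleton_iff] at hmem
      exact hmem
    · intro hx
      rw [if_pos hx, Set.mem_Icc] at hmem
      exact abs_le.mpr ⟨hmem.1, hmem.2⟩
  push_neg at hdisj
  exfalso
  -- K is compact and convex, G is closed and convex
  have hball_closed : IsClosed {y : Fin m → ℝ | l2 y ≤ 1} := by
    have hcont : Continuous fun y : Fin m → ℝ => l2 y := by
      unfold l2
      exact (continuous_finset_sum _ fun i _ => (continuous_apply i).pow 2).sqrt
    exact isClosed_le hcont continuous_const
  have hball_sub : {y : Fin m → ℝ | l2 y ≤ 1} ⊆ Metric.closedBall 0 1 := by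
    intro y hy
    rw [Metric.mem_closedBall, dist_zero_right]
    rw [pi_norm_le_iff_of_nonneg zero_le_one]
    intro i
    exact (abs_le_l2 y i).trans hy
  have hball_comp : IsCompact {y : Fin m → ℝ | l2 y ≤ 1} :=
    (isCompact_closedBall (0 : Fin m → ℝ) 1).of_isClosed_subset hball_closed hball_sub
  have hcontT : Continuous fun y : Fin m → ℝ => Aᵀ.mulVec y :=
    LinearMap.continuous_of_finiteDimensional (Matrix.mulVecLin Aᵀ)
  have hKcomp : IsCompact K := by
    rw [hK]; exact hball_comp.image hcontT
  have hKconv : Convex ℝ K := by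
    rw [hK]
    have hball_conv : Convex ℝ {y : Fin m → ℝ | l2 y ≤ 1} := by
      intro y1 h1 y2 h2 p q hp hq hpq
      have := l2_add_le (p • y1) (q • y2)
      rw [l2_smul, l2_smul, abs_of_nonneg hp, abs_of_nonneg hq] at this
      have : l2 (p • y1 + q • y2) ≤ p * 1 + q * 1 := by
        refine this.trans (add_le_add ?_ ?_)
        · exact mul_le_mul_of_nonneg_left h1 hp
        · exact mul_le_mul_of_nonneg_left h2 hq
      simpa [hpq] using this
    rintro g1 ⟨y1, h1, rfl⟩ g2 ⟨y2, h2, rfl⟩ p q hp hq hpq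
    refine ⟨p • y1 + q • y2, hball_conv h1 h2 hp hq hpq, ?_⟩
    simp only [Matrix.mulVec_add, Matrix.mulVec_smul]
  have hGconv : Convex ℝ G := by
    rw [hG]
    apply convex_pi
    intro i _
    simp only [hS]
    by_cases hx : xbar i = 0
    · rw [if_pos hx]; exact convex_Icc _ _
    · rw [if_neg hx]; exact convex_singleton _
  have hGclosed : IsClosed G := by
    rw [hG]
    apply isClosed_set_pi
    intro i _
    simp only [hS]
    by_cases hx : xbar i = 0
    · rw [if_pos hx]; exact isClosed_Icc
    · rw [if_neg hx]; exact isClosed_singleton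
  obtain ⟨f, u, v, hfK, huv, hfG⟩ :=
    geometric_hahn_banach_compact_closed hKconv hKcomp hGconv hGclosed hdisj
  -- representation of f
  set vv : Fin n → ℝ := fun i => f (Pi.single i 1 : Fin n → ℝ) with hvv
  have hrep : ∀ w : Fin n → ℝ, f w = dotp w vv := by
    intro w
    have hw : w = ∑ i, w i • (Pi.single i 1 : Fin n → ℝ) := by
      funext j
      rw [Finset.sum_apply]
      simp only [Pi.smul_apply, Pi.single_apply, smul_eq_mul, mul_ite, mul_one, mul_zero]
      rw [Finset.sum_ite_eq Finset.univ j (fun i => w i)]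
      simp
    conv_lhs => rw [hw]
    rw [map_sum]
    simp only [_root_.map_smul, smul_eq_mul]
    rfl
  -- the minimizing element of G
  set ghat : Fin n → ℝ := fun i =>
    if xbar i = 0 then -lam * Real.sign (vv i) else lam * Real.sign (xbar i) with hghat
  have hghatG : ghat ∈ G := by
    rw [hG, Set.mem_univ_pi]
    intro i
    simp only [hS, hghat]
    by_cases hx : xbar i = 0
    · rw [if_pos hx, if_pos hx, Set.mem_Icc]
      have habs : |(-lam * Real.sign (vv i))| ≤ lam := by
        rw [abs_mul, abs_neg, abs_of_pos hlam]
        nlinarith [abs_sign_le_one (vv i)]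
      exact abs_le.mp habs
    · rw [if_neg hx, if_neg hx]; exact Set.mem_singleton _
  have hghat_lt : v < f ghat := hfG ghat hghatG
  -- the maximizing element of K
  set Av : Fin m → ℝ := A.mulVec vv with hAv
  have hKelt : ∃ y : Fin m → ℝ, l2 y ≤ 1 ∧ dotp Av y = l2 Av := by
    by_cases hAv0 : Av = 0
    · refine ⟨0, by rw [l2_zero]; norm_num, ?_⟩
      rw [hAv0, l2_zero]; simp [dotp]
    · have hA2 : 0 < l2 Av := by
        rcases (l2_nonneg Av).lt_or_eq with h | h
        · exact h
        · exact absurd (l2_eq_zero_iff.mp h.symm) hAv0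
      refine ⟨(l2 Av)⁻¹ • Av, ?_, ?_⟩
      · rw [l2_smul, abs_of_nonneg (inv_nonneg.mpr hA2.le), inv_mul_cancel₀ hA2.ne']
      · rw [dotp_smul_right, dotp_self]
        field_simp
  obtain ⟨yhat, hyhat1, hyhat2⟩ := hKelt
  have hAv_lt : l2 Av < u := by
    have hmemK : Aᵀ.mulVec yhat ∈ K := ⟨yhat, hyhat1, rfl⟩
    have := hfK _ hmemK
    rw [hrep, dotp_comm, ← dotp_mulVec, ← hAv, hyhat2] at this
    exact this
  have hgap : l2 Av < f ghat := by linarith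
  -- choose small t
  have hev : ∀ᶠ t in 𝓝[>] (0:ℝ),
      (∀ i : Fin n, xbar i ≠ 0 → t * |vv i| < |xbar i|) ∧ 0 < t := by
    refine Filter.Eventually.and ?_ eventually_mem_nhdsWithin
    rw [eventually_all]
    intro i
    by_cases hx : xbar i = 0
    · exact Filter.Eventually.of_forall fun t hx' => absurd hx hx'
    · have htend : Filter.Tendsto (fun t : ℝ => t * |vv i|) (𝓝[>] 0) (𝓝 0) := by
        have : Filter.Tendsto (fun t : ℝ => t * |vv i|) (𝓝 0) (𝓝 (0 * |vv i|)) :=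
          (continuous_id.mul continuous_const).tendsto 0
        rw [zero_mul] at this
        exact this.mono_left nhdsWithin_le_nhds
      have := htend.eventually_lt_const (abs_pos.mpr hx)
      exact this.mono fun t ht _ => ht
  obtain ⟨t, ⟨htsm, ht0⟩⟩ := hev.exists
  -- contradiction with optimality at xbar - t • vv
  have hopt := hsol (xbar - t • vv)
  have hres : A.mulVec (xbar - t • vv) - b = (-t) • Av := by
    rw [Matrix.mulVec_sub, Matrix.mulVec_smul, hr, ← hAv]
    funext j; simp
  have hl2res : l2 (A.mulVec (xbar - t • vv) - b) = t * l2 Av := by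
    rw [hres, l2_smul, abs_neg, abs_of_pos ht0]
  have hterm : ∀ i : Fin n, lam * |xbar i - t * vv i| = lam * |xbar i| - t * (ghat i * vv i) := by
    intro i
    by_cases hx : xbar i = 0
    · have hgi : ghat i = -lam * Real.sign (vv i) := by simp [hghat, hx]
      rw [hgi, hx, zero_sub, abs_neg, abs_mul, abs_of_pos ht0, abs_zero]
      have h8 : -lam * Real.sign (vv i) * vv i = -(lam * |vv i|) := by
        rw [show -lam * Real.sign (vv i) * vv i = -(lam * (Real.sign (vv i) * vv i)) by ring,
          sign_mul_eq_abs]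
      rw [h8]; ring
    · have hgi : ghat i = lam * Real.sign (xbar i) := by simp [hghat, hx]
      rw [hgi]
      have habs : |(-(t * vv i))| < |xbar i| := by
        rw [abs_neg, abs_mul, abs_of_pos ht0]
        exact htsm i hx
      have h7 := abs_add_small hx habs
      rw [show xbar i + -(t * vv i) = xbar i - t * vv i from by ring] at h7
      rw [h7]; ring
  have hl1 : lam * l1 (xbar - t • vv) = lam * l1 xbar - t * dotp ghat vv := by
    rw [l1, Finset.mul_sum]
    have hcong : ∀ i ∈ Finset.univ, lam * |(xbar - t • vv) i| = lam * |xbar i| - t * (ghat i * vv i) := by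
      intro i _
      have h6 : (xbar - t • vv) i = xbar i - t * vv i := by simp
      rw [h6, hterm i]
    rw [Finset.sum_congr rfl hcong, Finset.sum_sub_distrib, ← Finset.mul_sum, ← Finset.mul_sum]
    rw [l1, dotp]
  have hsrw : srObj A b lam (xbar - t • vv)
      = t * l2 Av + (lam * l1 xbar - t * dotp ghat vv) := by
    rw [srObj, hl2res, hl1]
  have hsrx : srObj A b lam xbar = lam * l1 xbar := by
    rw [srObj, show A.mulVec xbar - b = 0 from sub_eq_zero.mpr hr, l2_zero]
    ring
  rw [hsrx, hsrw] at hopt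
  have hfg : f ghat = dotp ghat vv := hrep ghat
  have hfinal : dotp ghat vv ≤ l2 Av := by
    have h5 : t * dotp ghat vv ≤ t * l2 Av := by linarith
    exact le_of_mul_le_mul_left h5 ht0
  rw [← hfg] at hfinal
  linarith

/-- first-order optimality conditions: x̄ solves the
SR-LASSO and ȳ solves its dual iff (a) Aᵢᵀȳ = λ·sgn(x̄ᵢ) whenever x̄ᵢ ≠ 0 and
|Aᵢᵀȳ| ≤ λ whenever x̄ᵢ = 0; and (b) ȳ = (b − Ax̄)/‖Ax̄ − b‖₂ if Ax̄ ≠ b,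
while ‖ȳ‖₂ ≤ 1 if Ax̄ = b. -/
theorem stmt_5 {m n : ℕ} (A : Matrix (Fin m) (Fin n) ℝ) (b : Fin m → ℝ)
    (lam : ℝ) (hlam : 0 < lam) (xbar : Fin n → ℝ) (ybar : Fin m → ℝ) :
    (IsSol A b lam xbar ∧ IsDualSol A b lam ybar)
      ↔ ((∀ i : Fin n,
            (xbar i ≠ 0 → Aᵀ.mulVec ybar i = lam * Real.sign (xbar i)) ∧
            (xbar i = 0 → |Aᵀ.mulVec ybar i| ≤ lam)) ∧
          (A.mulVec xbar ≠ b →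
            ybar = (l2 (A.mulVec xbar - b))⁻¹ • (b - A.mulVec xbar)) ∧
          (A.mulVec xbar = b → l2 ybar ≤ 1)) := by
  constructor
  · rintro ⟨hsol, hdual⟩
    have hcert : ∃ y, Cert A b lam xbar y := by
      by_cases hr : A.mulVec xbar = b
      · exact exists_cert_eqcase hlam hsol hr
      · exact ⟨_, exists_cert_ne hlam hsol hr⟩
    obtain ⟨y, hy⟩ := hcert
    obtain ⟨hyfeas, hyeq⟩ := cert_feas_eq hlam hy
    have h1 : dotp b y ≤ dotp b ybar := hdual.2 y hyfeas
    have h2 : dotp b ybar ≤ srObj A b lam xbar := weak_duality hdual.1 xbar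
    have heq : dotp b ybar = srObj A b lam xbar :=
      le_antisymm h2 (by rw [← hyeq]; exact h1)
    exact extract_cert hlam hdual.1 heq
  · intro hc
    have hc' : Cert A b lam xbar ybar := hc
    obtain ⟨hfeas, heq⟩ := cert_feas_eq hlam hc'
    refine ⟨fun w => ?_, hfeas, fun y' hy' => ?_⟩
    · calc srObj A b lam xbar = dotp b ybar := heq.symm
        _ ≤ srObj A b lam w := weak_duality hfeas w
    · calc dotp b y' ≤ srObj A b lam xbar := weak_duality hy' xbar
        _ = dotp b ybar := heq.symm
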